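/- For every n and every positive integer k with 2k < n, there exists a finite set S of simple graphs on the vertex set Fin n such that every graph in S is an interval graph, the graphs in S are pairwise non-isomorphic, and 3^n · |S| ≥ C(k², n − 2k), where C(·,·) denotes the binomial coefficient. -/

import Mathlib

/-- A simple graph on `Fin n` is an interval graph if it has a realization by
closed real intervals. -/
def IsIntervalGraph {n : ℕ} (G : SimpleGraph (Fin n)) : Prop :=
  ∃ l r : Fin n → ℝ, (∀ v, l v ≤ r v) ∧
    ∀ u v : Fin n, u ≠ v →
      (G.Adj u v ↔ (Set.Icc (l u) (r u) ∩ Set.Icc (l v) (r v)).Nonempty)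

/-!
The vertices `0, …, 2k - 1` are the points `0, …, 2k - 1`, and each remaining vertex is an
interval `[a, k + b]` with `a, b < k`, one for each cell `(a, b)` of a chosen set of `n - 2k`
cells of the `k × k` grid. Such a vertex has `k - a` neighbours among the first `k` points and
`b + 1` among the next `k`, so once it is known which vertices form which of the three blocks
(one of `3 ^ n` labellings), the graph determines the chosen cells. An isomorphism carries such a
labelling along, hence each isomorphism class contains at most `3 ^ n` of the
`C(k², n - 2k)` graphs.
-/

open Finset

namespace SimpleGraph

variable {V ι : Type*}

def isoSetoid (V : Type*) : Setoid (SimpleGraph V) where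
  r G H := Nonempty (G ≃g H)
  iseqv := ⟨fun _ => ⟨Iso.refl⟩, fun ⟨e⟩ => ⟨e.symm⟩, fun ⟨e⟩ ⟨f⟩ => ⟨e.trans f⟩⟩

open scoped Classical in
theorem exists_pairwise_nonIso_card_le (T : Finset ι) (g : ι → SimpleGraph V) (m : ℕ)
    (hm : ∀ H : SimpleGraph V, #{i ∈ T | Nonempty (g i ≃g H)} ≤ m) :
    ∃ S : Finset (SimpleGraph V), (∀ H ∈ S, ∃ i ∈ T, Nonempty (g i ≃g H)) ∧
      (∀ G ∈ S, ∀ H ∈ S, G ≠ H → IsEmpty (G ≃g H)) ∧ #T ≤ m * #S := by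
  let cls : ι → Quotient (isoSetoid V) := fun i => Quotient.mk _ (g i)
  have hcls (i : ι) : Nonempty (g i ≃g (cls i).out) :=
    Quotient.mk_eq_iff_out.mp (rfl : cls i = cls i)
  refine ⟨(T.image cls).image Quotient.out, ?_, ?_, ?_⟩
  · simp only [mem_image]
    rintro _ ⟨_, ⟨i, hi, rfl⟩, rfl⟩
    exact ⟨i, hi, hcls i⟩
  · simp only [mem_image]
    rintro _ ⟨_, _, rfl⟩ _ ⟨_, _, rfl⟩ hne
    exact ⟨fun e => hne (congrArg Quotient.out (Quotient.out_equiv_out.mp ⟨e⟩))⟩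
  · rw [card_image_of_injective _ Quotient.out_injective]
    refine card_le_mul_card_image T m fun q _ => le_trans (le_of_eq ?_) (hm q.out)
    congr 1
    ext i
    simp only [mem_filter, cls, Quotient.mk_eq_iff_out]
    rfl

open scoped Classical in
noncomputable def labelDegree [Fintype V] (G : SimpleGraph V) {L : Type*} (t : V → L) (j : L)
    (v : V) : ℕ :=
  #{a | t a = j ∧ G.Adj a v}

theorem labelDegree_iso [Fintype V] {L : Type*} {G H : SimpleGraph V} (e : G ≃g H) (t : V → L)
    (j : L) (v : V) : H.labelDegree (t ∘ e.symm) j (e v) = G.labelDegree t j v :=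
  card_equiv e.symm.toEquiv fun a => by simp [← e.symm.map_adj_iff]

open scoped Classical in
theorem card_filter_iso_le_of_decode [Fintype V] {L : Type*} [Fintype L] (T : Finset ι)
    (g : ι → SimpleGraph V) (decode : SimpleGraph V → (V → L) → ι)
    (hdecode : ∀ {G H : SimpleGraph V} (e : G ≃g H) (t : V → L),
      decode H (t ∘ e.symm) = decode G t)
    (hT : ∀ i ∈ T, ∃ t, decode (g i) t = i) (H : SimpleGraph V) :
    #{i ∈ T | Nonempty (g i ≃g H)} ≤ Fintype.card L ^ Fintype.card V := by
  have hdecodable : {i ∈ T | Nonempty (g i ≃g H)} ⊆ univ.image (decode H) := by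
    intro i hi
    obtain ⟨hiT, ⟨e⟩⟩ := mem_filter.mp hi
    obtain ⟨t, ht⟩ := hT i hiT
    exact mem_image.mpr ⟨t ∘ e.symm, mem_univ _, (hdecode e t).trans ht⟩
  calc #{i ∈ T | Nonempty (g i ≃g H)} ≤ #(univ.image (decode H)) := card_le_card hdecodable
    _ ≤ #(univ : Finset (V → L)) := card_image_le
    _ = Fintype.card L ^ Fintype.card V := by simp

end SimpleGraph

theorem Finset.exists_image_eq_of_card_eq {α β : Type*} [DecidableEq β] [Nonempty β]
    {s : Finset α} {t : Finset β} (h : #s = #t) : ∃ f : α → β, s.image f = t := by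
  classical
  let e : s ≃ t := Fintype.equivOfCardEq (by simpa using h)
  refine ⟨fun a => if ha : a ∈ s then e ⟨a, ha⟩ else Classical.arbitrary β, ?_⟩
  ext b
  simp only [mem_image]
  constructor
  · rintro ⟨a, ha, rfl⟩
    simp [ha]
  · intro hb
    exact ⟨e.symm ⟨b, hb⟩, (e.symm _).2, by simp⟩

theorem IsIntervalGraph.of_iso {n : ℕ} {G H : SimpleGraph (Fin n)} (e : G ≃g H)
    (hG : IsIntervalGraph G) : IsIntervalGraph H := by
  obtain ⟨l, r, hlr, hadj⟩ := hG
  refine ⟨l ∘ e.symm, r ∘ e.symm, fun v => hlr _, fun u v huv => ?_⟩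
  rw [← e.symm.map_adj_iff]
  exact hadj _ _ (e.symm.injective.ne huv)

/-- The graph whose vertex `v` is the integer interval `[l v, r v]`. -/
def intervalGraphOf {V : Type*} (l r : V → ℕ) : SimpleGraph V where
  Adj u v := u ≠ v ∧ max (l u) (l v) ≤ min (r u) (r v)
  symm := ⟨fun _ _ h => ⟨h.1.symm, by rw [max_comm, min_comm]; exact h.2⟩⟩
  loopless := ⟨fun _ h => h.1 rfl⟩

theorem isIntervalGraph_intervalGraphOf {n : ℕ} (l r : Fin n → ℕ) (hlr : ∀ v, l v ≤ r v) :
    IsIntervalGraph (intervalGraphOf l r) := by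
  refine ⟨fun v => l v, fun v => r v, fun v => Nat.cast_le.mpr (hlr v), fun u v huv => ?_⟩
  rw [Set.Icc_inter_Icc, Set.nonempty_Icc]
  change _ ∧ _ ↔ _
  push_cast [← Nat.cast_max, ← Nat.cast_min, Nat.cast_le]
  exact and_iff_right huv

theorem Fin.card_filter_le_val_lt {n : ℕ} (lo hi : ℕ) (h : hi ≤ n) :
    #{a : Fin n | lo ≤ a.val ∧ a.val < hi} = hi - lo := by
  rw [← Nat.card_Ico, ← card_attachFin (Ico lo hi) fun x hx => (mem_Ico.mp hx).2.trans_le h]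
  congr 1
  ext a
  simp

section CellGraph

variable {n : ℕ} (k : ℕ)

def cellRole (v : Fin n) : Fin 3 := if v.val < k then 0 else if v.val < 2 * k then 1 else 2

def cellLeft (c : Fin n → ℕ × ℕ) (v : Fin n) : ℕ := if v.val < 2 * k then v.val else (c v).1

def cellRight (c : Fin n → ℕ × ℕ) (v : Fin n) : ℕ := if v.val < 2 * k then v.val else k + (c v).2

def cellGraph (c : Fin n → ℕ × ℕ) : SimpleGraph (Fin n) :=
  intervalGraphOf (cellLeft k c) (cellRight k c)

variable {k}

theorem cellRole_eq_zero {v : Fin n} : cellRole k v = 0 ↔ v.val < k := by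
  unfold cellRole; split_ifs <;> simp <;> omega

theorem cellRole_eq_one {v : Fin n} : cellRole k v = 1 ↔ k ≤ v.val ∧ v.val < 2 * k := by
  unfold cellRole; split_ifs <;> simp <;> omega

theorem cellRole_eq_two {v : Fin n} : cellRole k v = 2 ↔ 2 * k ≤ v.val := by
  unfold cellRole; split_ifs <;> simp <;> omega

theorem isIntervalGraph_cellGraph {c : Fin n → ℕ × ℕ}
    (hc : ∀ v : Fin n, 2 * k ≤ v.val → c v ∈ range k ×ˢ range k) :
    IsIntervalGraph (cellGraph k c) := by
  refine isIntervalGraph_intervalGraphOf _ _ fun v => ?_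
  unfold cellLeft cellRight
  split_ifs with hv
  · rfl
  · have hcv := mem_product.mp (hc v (by omega))
    simp only [mem_range] at hcv
    omega

theorem cellGraph_adj_iff (c : Fin n → ℕ × ℕ) {u v : Fin n} (hu : u.val < 2 * k)
    (hv : 2 * k ≤ v.val) :
    (cellGraph k c).Adj u v ↔ (c v).1 ≤ u.val ∧ u.val ≤ k + (c v).2 := by
  simp only [cellGraph, intervalGraphOf, cellLeft, cellRight, if_pos hu, if_neg (not_lt.mpr hv),
    ne_eq, Fin.ext_iff]
  omega

theorem labelDegree_cellGraph_zero (c : Fin n → ℕ × ℕ) {v : Fin n} (hv : 2 * k ≤ v.val) :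
    (cellGraph k c).labelDegree (cellRole k) 0 v = k - (c v).1 := by
  rw [SimpleGraph.labelDegree, ← Fin.card_filter_le_val_lt (n := n) (c v).1 k (by omega)]
  congr 1
  ext a
  simp only [mem_filter, mem_univ, true_and, cellRole_eq_zero]
  constructor
  · rintro ⟨ha, hadj⟩
    exact ⟨((cellGraph_adj_iff c (by omega) hv).mp hadj).1, ha⟩
  · rintro ⟨hca, ha⟩
    exact ⟨ha, (cellGraph_adj_iff c (by omega) hv).mpr ⟨hca, by omega⟩⟩

theorem labelDegree_cellGraph_one {c : Fin n → ℕ × ℕ} {v : Fin n} (hv : 2 * k ≤ v.val)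
    (hc : c v ∈ range k ×ˢ range k) :
    (cellGraph k c).labelDegree (cellRole k) 1 v = (c v).2 + 1 := by
  simp only [mem_product, mem_range] at hc
  rw [SimpleGraph.labelDegree, ← Nat.add_sub_cancel_left (n := k) (m := (c v).2 + 1),
    ← Fin.card_filter_le_val_lt (n := n) k (k + ((c v).2 + 1)) (by omega)]
  congr 1
  ext b
  simp only [mem_filter, mem_univ, true_and, cellRole_eq_one]
  constructor
  · rintro ⟨hb, hadj⟩
    exact ⟨hb.1, Nat.lt_succ_of_le ((cellGraph_adj_iff c hb.2 hv).mp hadj).2⟩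
  · rintro ⟨hkb, hb⟩
    exact ⟨⟨hkb, by omega⟩, (cellGraph_adj_iff c (by omega) hv).mpr ⟨by omega, by omega⟩⟩

end CellGraph

noncomputable def decodeCells {V : Type*} [Fintype V] (k : ℕ) (H : SimpleGraph V)
    (t : V → Fin 3) : Finset (ℕ × ℕ) :=
  image (fun v => (k - H.labelDegree t 0 v, H.labelDegree t 1 v - 1)) {v | t v = 2}

theorem decodeCells_iso {V : Type*} [Fintype V] (k : ℕ) {G H : SimpleGraph V} (e : G ≃g H)
    (t : V → Fin 3) : decodeCells k H (t ∘ e.symm) = decodeCells k G t := by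
  classical
  have hC : ({v | (t ∘ e.symm) v = 2} : Finset V) = map e.toEquiv.toEmbedding {v | t v = 2} := by
    ext v
    simp only [mem_filter, mem_univ, true_and, mem_map_equiv, Function.comp_apply]
    rfl
  unfold decodeCells
  rw [hC, map_eq_image, image_image]
  refine image_congr fun v _ => ?_
  simp [SimpleGraph.labelDegree_iso]

theorem decodeCells_cellGraph {n k : ℕ} {c : Fin n → ℕ × ℕ}
    (hc : ∀ v : Fin n, 2 * k ≤ v.val → c v ∈ range k ×ˢ range k) :
    decodeCells k (cellGraph k c) (cellRole k) = image c {v | 2 * k ≤ v.val} := by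
  classical
  unfold decodeCells
  simp only [cellRole_eq_two]
  refine image_congr fun v hv => ?_
  have hv : 2 * k ≤ v.val := (mem_filter.mp hv).2
  rw [labelDegree_cellGraph_zero c hv, labelDegree_cellGraph_one hv (hc v hv)]
  have ha := (mem_product.mp (hc v hv)).1
  simp only [mem_range] at ha
  ext <;> simp only <;> omega

theorem interval_graph_family_binomial_bound_general (n k : ℕ) :
    ∃ S : Finset (SimpleGraph (Fin n)),
      (∀ G ∈ S, IsIntervalGraph G) ∧
      (∀ G ∈ S, ∀ H ∈ S, G ≠ H → IsEmpty (G ≃g H)) ∧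
      (k ^ 2).choose (n - 2 * k) ≤ 3 ^ n * S.card := by
  classical
  let T := powersetCard (n - 2 * k) (range k ×ˢ range k)
  have hcells (s) (hs : s ∈ T) : ∃ c : Fin n → ℕ × ℕ, image c {v | 2 * k ≤ v.val} = s := by
    refine exists_image_eq_of_card_eq ?_
    rw [(mem_powersetCard.mp hs).2]
    simpa using Fin.card_filter_le_val_lt (n := n) (2 * k) n le_rfl
  choose! c hc using hcells
  have hcT (s) (hs : s ∈ T) (v : Fin n) (hv : 2 * k ≤ v.val) : c s v ∈ range k ×ˢ range k := by
    have hvs : c s v ∈ image (c s) {v | 2 * k ≤ v.val} :=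
      mem_image_of_mem (c s) (mem_filter.mpr ⟨mem_univ v, hv⟩)
    rw [hc s hs] at hvs
    exact (mem_powersetCard.mp hs).1 hvs
  obtain ⟨S, hST, hS, hcard⟩ := SimpleGraph.exists_pairwise_nonIso_card_le T
    (fun s => cellGraph k (c s)) _
    (SimpleGraph.card_filter_iso_le_of_decode T _ (decodeCells k) (decodeCells_iso k)
      fun s hs => ⟨cellRole k, (decodeCells_cellGraph (hcT s hs)).trans (hc s hs)⟩)
  refine ⟨S, fun H hH => ?_, hS, ?_⟩
  · obtain ⟨s, hs, ⟨e⟩⟩ := hST H hH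
    exact (isIntervalGraph_cellGraph (hcT s hs)).of_iso e
  · simpa [T, card_powersetCard, sq] using hcard

/-- For every `n` and every positive `k` with `2k < n`, there is a finite family of pairwise
non-isomorphic interval graphs on `Fin n` whose cardinality `|S|` satisfies
`3^n · |S| ≥ C(k², n − 2k)`. -/
theorem interval_graph_family_binomial_bound (n k : ℕ) (hk : 0 < k) (hkn : 2 * k < n) :
    ∃ S : Finset (SimpleGraph (Fin n)),
      (∀ G ∈ S, IsIntervalGraph G) ∧
      (∀ G ∈ S, ∀ H ∈ S, G ≠ H → IsEmpty (G ≃g H)) ∧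
      (k ^ 2).choose (n - 2 * k) ≤ 3 ^ n * S.card :=
  interval_graph_family_binomial_bound_general n k
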